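/- arXiv:1401.5689 — 3 statements merged into one kernel-verified Lean document; each statement's English description precedes it below -/
import Mathlib

section
/- Let (Ω, 𝔉, ℙ) be a probability space and let A : Ω → ℝ^{d×d} be a measurable map taking values in symmetric matrices, such that for some constants 0 < c ≤ C, c‖ξ‖² ≤ ξ · A(ω)ξ ≤ C‖ξ‖² for all ξ ∈ ℝᵈ and ℙ-almost every ω. Then for every e ∈ ℝᵈ, the infimum of ∫_Ω (e + V(ω)) · A(ω)(e + V(ω)) dℙ(ω) over all V ∈ L²(Ω, ℙ; ℝᵈ) with ∫_Ω V dℙ = 0 equals e · (∫_Ω A(ω)⁻¹ dℙ(ω))⁻¹ e. Moreover the infimum is attained at V*(ω) = A(ω)⁻¹ λ − e with λ = (∫ A⁻¹ dℙ)⁻¹ e, and the minimizer is unique up to ℙ-almost-everywhere equality. -/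
/-!
Write `B = ∫ A⁻¹ dℙ`, `λ = B⁻¹ e` and `u = A⁻¹ λ`. Since `A` is symmetric and `A u = λ`, for every
field `W` the quadratic form completes to a square,
`(W - u) · A (W - u) = W · A W - 2 λ · W + λ · A⁻¹ λ`.
When `∫ W = e = B λ`, integrating gives `∫ W · A W = λ · e + ∫ (W - u) · A (W - u)`, so the energy
of `W = e + V` is at least `e · B⁻¹ e`, with equality exactly when `W = u` almost everywhere by
coercivity of `A`. The candidate `V* = u - e` is admissible because `∫ u = B λ = e`; all
integrability comes from the bound `|A⁻¹ i j| ≤ c⁻¹`.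
-/

open Matrix MeasureTheory

namespace Matrix

variable {n : Type*} [Fintype n]

lemma dotProduct_self_nonneg (v : n → ℝ) : 0 ≤ v ⬝ᵥ v :=
  Finset.sum_nonneg fun i _ => mul_self_nonneg (v i)

lemma sq_apply_le_dotProduct_self (v : n → ℝ) (i : n) : v i ^ 2 ≤ v ⬝ᵥ v := by
  rw [sq]
  exact Finset.single_le_sum (fun j _ => mul_self_nonneg (v j)) (Finset.mem_univ i)

variable {M : Matrix n n ℝ} {c : ℝ}

lemma dotProduct_mulVec_self_nonneg_of_coercive (hc : 0 ≤ c)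
    (hM : ∀ ξ, c * (ξ ⬝ᵥ ξ) ≤ ξ ⬝ᵥ M *ᵥ ξ) (ξ : n → ℝ) : 0 ≤ ξ ⬝ᵥ M *ᵥ ξ :=
  (mul_nonneg hc (dotProduct_self_nonneg ξ)).trans (hM ξ)

lemma dotProduct_mulVec_self_pos_of_coercive (hc : 0 < c)
    (hM : ∀ ξ, c * (ξ ⬝ᵥ ξ) ≤ ξ ⬝ᵥ M *ᵥ ξ) {ξ : n → ℝ} (hξ : ξ ≠ 0) : 0 < ξ ⬝ᵥ M *ᵥ ξ :=
  (mul_pos hc ((dotProduct_self_nonneg ξ).lt_of_ne' (mt dotProduct_self_eq_zero.1 hξ))).trans_le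
    (hM ξ)

variable [DecidableEq n]

lemma mulVec_inv_mulVec_of_isUnit (hM : IsUnit M) (v : n → ℝ) : M *ᵥ (M⁻¹ *ᵥ v) = v := by
  rw [mulVec_mulVec, mul_nonsing_inv _ ((isUnit_iff_isUnit_det M).1 hM), one_mulVec]

lemma isUnit_of_dotProduct_mulVec_self_pos (hM : ∀ ξ ≠ 0, 0 < ξ ⬝ᵥ M *ᵥ ξ) : IsUnit M := by
  refine mulVec_injective_iff_isUnit.1 fun x y hxy => sub_eq_zero.1 ?_
  by_contra hne
  have hpos := hM _ hne
  rw [mulVec_sub, hxy, sub_self, dotProduct_zero] at hpos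
  exact hpos.false

lemma isUnit_of_coercive (hc : 0 < c) (hM : ∀ ξ, c * (ξ ⬝ᵥ ξ) ≤ ξ ⬝ᵥ M *ᵥ ξ) : IsUnit M :=
  isUnit_of_dotProduct_mulVec_self_pos fun _ => dotProduct_mulVec_self_pos_of_coercive hc hM

lemma dotProduct_inv_mulVec_self_pos_of_coercive (hc : 0 < c)
    (hM : ∀ ξ, c * (ξ ⬝ᵥ ξ) ≤ ξ ⬝ᵥ M *ᵥ ξ) {ξ : n → ℝ} (hξ : ξ ≠ 0) :
    0 < ξ ⬝ᵥ M⁻¹ *ᵥ ξ := by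
  have hMη := mulVec_inv_mulVec_of_isUnit (isUnit_of_coercive hc hM) ξ
  have hη : M⁻¹ *ᵥ ξ ≠ 0 := fun h => hξ (by rw [← hMη, h, mulVec_zero])
  have hpos := dotProduct_mulVec_self_pos_of_coercive hc hM hη
  rwa [hMη, dotProduct_comm] at hpos

lemma abs_inv_apply_le_of_coercive (hc : 0 < c)
    (hM : ∀ ξ, c * (ξ ⬝ᵥ ξ) ≤ ξ ⬝ᵥ M *ᵥ ξ) (i j : n) : |M⁻¹ i j| ≤ c⁻¹ := by
  set η := M⁻¹ *ᵥ Pi.single j 1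
  have hMη : M *ᵥ η = Pi.single j 1 := mulVec_inv_mulVec_of_isUnit (isUnit_of_coercive hc hM) _
  have hcη : c * (η ⬝ᵥ η) ≤ η j := by simpa [hMη] using hM η
  have hηi : η i = M⁻¹ i j := by simp [η]
  -- `η` is the `j`-th column of `M⁻¹`, and `c ‖η‖² ≤ η j ≤ ‖η‖` gives `‖η‖ ≤ c⁻¹`
  have hsq : (c * (η ⬝ᵥ η)) ^ 2 ≤ η ⬝ᵥ η :=
    (pow_le_pow_left₀ (by positivity [dotProduct_self_nonneg η]) hcη 2).trans
      (sq_apply_le_dotProduct_self η j)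
  have hηη : η ⬝ᵥ η ≤ c⁻¹ ^ 2 := by
    rw [inv_pow, ← one_div, le_div_iff₀ (by positivity)]
    rcases (dotProduct_self_nonneg η).eq_or_lt with h | h
    · rw [← h]; norm_num
    · nlinarith
  rw [← hηi]
  exact abs_le_of_sq_le_sq ((sq_apply_le_dotProduct_self η i).trans hηη) (inv_nonneg.2 hc.le)

lemma dotProduct_sub_inv_mulVec_expand (hs : M.IsSymm) (hM : IsUnit M) (w l : n → ℝ) :
    (w - M⁻¹ *ᵥ l) ⬝ᵥ M *ᵥ (w - M⁻¹ *ᵥ l)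
      = w ⬝ᵥ M *ᵥ w - 2 * (l ⬝ᵥ w) + l ⬝ᵥ M⁻¹ *ᵥ l := by
  have hMu := mulVec_inv_mulVec_of_isUnit hM l
  have hcross : M⁻¹ *ᵥ l ⬝ᵥ M *ᵥ w = l ⬝ᵥ w := by
    rw [dotProduct_mulVec, ← mulVec_transpose, hs.eq, hMu]
  simp only [mulVec_sub, sub_dotProduct, dotProduct_sub, hcross, hMu, dotProduct_comm _ l]
  ring

end Matrix

namespace MeasureTheory

variable {Ω : Type*} [MeasurableSpace Ω] {μ : Measure Ω} {m n : Type*} [Fintype n]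

lemma integral_pos_of_ae_pos [NeZero μ] {f : Ω → ℝ} (hf : ∀ᵐ ω ∂μ, 0 < f ω)
    (hfi : Integrable f μ) : 0 < ∫ ω, f ω ∂μ := by
  rw [integral_pos_iff_support_of_nonneg_ae (hf.mono fun _ h => h.le) hfi]
  refine pos_iff_ne_zero.2 fun h0 => ?_
  obtain ⟨ω, hpos, hnot⟩ := (hf.and (measure_eq_zero_iff_ae_notMem.1 h0)).exists
  exact hnot hpos.ne'

lemma Integrable.const_dotProduct {f : Ω → n → ℝ} (hf : Integrable f μ) (v : n → ℝ) :
    Integrable (fun ω => v ⬝ᵥ f ω) μ :=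
  integrable_finsetSum _ fun i _ => (hf.eval i).const_mul (v i)

lemma integral_dotProduct {f : Ω → n → ℝ} (hf : Integrable f μ) (v : n → ℝ) :
    ∫ ω, v ⬝ᵥ f ω ∂μ = v ⬝ᵥ ∫ ω, f ω ∂μ := by
  simp only [dotProduct]
  rw [integral_finsetSum _ fun i _ => (hf.eval i).const_mul (v i)]
  simp only [integral_const_mul, eval_integral hf.eval]

lemma MemLp.integrable_dotProduct_self {f : Ω → n → ℝ} (hf : MemLp f 2 μ) :
    Integrable (fun ω => f ω ⬝ᵥ f ω) μ := by
  simp only [dotProduct, ← sq]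
  exact integrable_finsetSum _ fun i _ => (hf.eval i).integrable_sq

lemma integral_mulVec [Fintype m] {N : Ω → Matrix m n ℝ}
    (hN : ∀ i j, Integrable (fun ω => N ω i j) μ) (v : n → ℝ) :
    ∫ ω, N ω *ᵥ v ∂μ = (of fun i j => ∫ ω, N ω i j ∂μ) *ᵥ v := by
  have hrow : ∀ i, Integrable (fun ω => (N ω *ᵥ v) i) μ := fun i =>
    integrable_finsetSum _ fun j _ => (hN i j).mul_const (v j)
  ext i
  rw [eval_integral hrow]
  simp only [mulVec, dotProduct, of_apply]
  rw [integral_finsetSum _ fun j _ => (hN i j).mul_const (v j)]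
  simp only [integral_mul_const]

lemma integrable_dotProduct_mulVec_self {A : Ω → Matrix n n ℝ} {W : Ω → n → ℝ} {C : ℝ}
    (hmeas : ∀ i j, Measurable fun ω => A ω i j)
    (hpos : ∀ᵐ ω ∂μ, ∀ ξ, 0 ≤ ξ ⬝ᵥ A ω *ᵥ ξ)
    (hbdd : ∀ᵐ ω ∂μ, ∀ ξ, ξ ⬝ᵥ A ω *ᵥ ξ ≤ C * (ξ ⬝ᵥ ξ)) (hW : MemLp W 2 μ) :
    Integrable (fun ω => W ω ⬝ᵥ A ω *ᵥ W ω) μ := by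
  have hWi : ∀ i, AEStronglyMeasurable (fun ω => W ω i) μ := fun i =>
    (hW.eval i).aestronglyMeasurable
  have hq : AEStronglyMeasurable (fun ω => W ω ⬝ᵥ A ω *ᵥ W ω) μ := by
    simp only [dotProduct, mulVec]
    fun_prop
  refine (hW.integrable_dotProduct_self.const_mul C).mono' hq ?_
  filter_upwards [hpos, hbdd] with ω h0 h1
  rw [Real.norm_of_nonneg (h0 _)]
  exact h1 _

end MeasureTheory

section RandomMatrix

variable {Ω : Type*} [MeasurableSpace Ω] {μ : Measure Ω} {n : Type*} [Fintype n]
  {A : Ω → Matrix n n ℝ} {c C : ℝ}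

noncomputable def energy (μ : Measure Ω) (A : Ω → Matrix n n ℝ) (W : Ω → n → ℝ) : ℝ :=
  ∫ ω, W ω ⬝ᵥ A ω *ᵥ W ω ∂μ

lemma energy_nonneg (hpos : ∀ᵐ ω ∂μ, ∀ ξ, 0 ≤ ξ ⬝ᵥ A ω *ᵥ ξ) (W : Ω → n → ℝ) :
    0 ≤ energy μ A W :=
  integral_nonneg_of_ae (hpos.mono fun _ h => h _)

lemma ae_eq_zero_of_energy_eq_zero (hmeas : ∀ i j, Measurable fun ω => A ω i j) (hc : 0 < c)
    (hcoer : ∀ᵐ ω ∂μ, ∀ ξ, c * (ξ ⬝ᵥ ξ) ≤ ξ ⬝ᵥ A ω *ᵥ ξ)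
    (hbdd : ∀ᵐ ω ∂μ, ∀ ξ, ξ ⬝ᵥ A ω *ᵥ ξ ≤ C * (ξ ⬝ᵥ ξ)) {W : Ω → n → ℝ} (hW : MemLp W 2 μ)
    (h : energy μ A W = 0) : W =ᵐ[μ] 0 := by
  have hpos := hcoer.mono fun _ h => dotProduct_mulVec_self_nonneg_of_coercive hc.le h
  have hq : (fun ω => W ω ⬝ᵥ A ω *ᵥ W ω) =ᵐ[μ] 0 :=
    (integral_eq_zero_iff_of_nonneg_ae (hpos.mono fun _ h => h _)
      (integrable_dotProduct_mulVec_self hmeas hpos hbdd hW)).1 h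
  filter_upwards [hq, hcoer] with ω hq hcoer
  by_contra hne
  exact (dotProduct_mulVec_self_pos_of_coercive hc hcoer hne).ne' hq

variable [DecidableEq n]

noncomputable def meanInv (μ : Measure Ω) (A : Ω → Matrix n n ℝ) : Matrix n n ℝ :=
  of fun i j => ∫ ω, (A ω)⁻¹ i j ∂μ

lemma measurable_det_of_measurable_apply (hmeas : ∀ i j, Measurable fun ω => A ω i j) :
    Measurable fun ω => (A ω).det := by
  simp only [det_apply']
  fun_prop

lemma measurable_inv_apply (hmeas : ∀ i j, Measurable fun ω => A ω i j) (i j : n) :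
    Measurable fun ω => (A ω)⁻¹ i j := by
  simp only [inv_def, Ring.inverse_eq_inv, Matrix.smul_apply, smul_eq_mul, adjugate_apply]
  refine (measurable_det_of_measurable_apply hmeas).inv.mul
    (measurable_det_of_measurable_apply fun a b => ?_)
  simp only [updateRow_apply]
  split_ifs <;> fun_prop

section Finite

variable [IsFiniteMeasure μ]

lemma memLp_inv_apply (hmeas : ∀ i j, Measurable fun ω => A ω i j) (hc : 0 < c)
    (hcoer : ∀ᵐ ω ∂μ, ∀ ξ, c * (ξ ⬝ᵥ ξ) ≤ ξ ⬝ᵥ A ω *ᵥ ξ) (p : ENNReal) (i j : n) :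
    MemLp (fun ω => (A ω)⁻¹ i j) p μ :=
  .of_bound (measurable_inv_apply hmeas i j).aestronglyMeasurable c⁻¹ <| hcoer.mono fun _ h =>
    (Real.norm_eq_abs _).trans_le (abs_inv_apply_le_of_coercive hc h i j)

lemma memLp_inv_mulVec (hmeas : ∀ i j, Measurable fun ω => A ω i j) (hc : 0 < c)
    (hcoer : ∀ᵐ ω ∂μ, ∀ ξ, c * (ξ ⬝ᵥ ξ) ≤ ξ ⬝ᵥ A ω *ᵥ ξ) (p : ENNReal) (v : n → ℝ) :
    MemLp (fun ω => (A ω)⁻¹ *ᵥ v) p μ :=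
  MemLp.of_eval fun i => memLp_finsetSum _ fun j _ =>
    (memLp_inv_apply hmeas hc hcoer p i j).mul_const (v j)

lemma integral_inv_mulVec (hmeas : ∀ i j, Measurable fun ω => A ω i j) (hc : 0 < c)
    (hcoer : ∀ᵐ ω ∂μ, ∀ ξ, c * (ξ ⬝ᵥ ξ) ≤ ξ ⬝ᵥ A ω *ᵥ ξ) (v : n → ℝ) :
    ∫ ω, (A ω)⁻¹ *ᵥ v ∂μ = meanInv μ A *ᵥ v :=
  integral_mulVec (fun i j => memLp_one_iff_integrable.1 (memLp_inv_apply hmeas hc hcoer 1 i j)) v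

lemma isUnit_meanInv [NeZero μ] (hmeas : ∀ i j, Measurable fun ω => A ω i j) (hc : 0 < c)
    (hcoer : ∀ᵐ ω ∂μ, ∀ ξ, c * (ξ ⬝ᵥ ξ) ≤ ξ ⬝ᵥ A ω *ᵥ ξ) : IsUnit (meanInv μ A) := by
  refine isUnit_of_dotProduct_mulVec_self_pos fun ξ hξ => ?_
  have hint := memLp_one_iff_integrable.1 (memLp_inv_mulVec hmeas hc hcoer 1 ξ)
  rw [← integral_inv_mulVec hmeas hc hcoer, ← integral_dotProduct hint]
  exact integral_pos_of_ae_pos (hcoer.mono fun _ h =>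
    dotProduct_inv_mulVec_self_pos_of_coercive hc h hξ) (hint.const_dotProduct ξ)

lemma energy_eq_add_energy_sub (hmeas : ∀ i j, Measurable fun ω => A ω i j) (hc : 0 < c)
    (hsymm : ∀ᵐ ω ∂μ, (A ω).IsSymm) (hcoer : ∀ᵐ ω ∂μ, ∀ ξ, c * (ξ ⬝ᵥ ξ) ≤ ξ ⬝ᵥ A ω *ᵥ ξ)
    (hbdd : ∀ᵐ ω ∂μ, ∀ ξ, ξ ⬝ᵥ A ω *ᵥ ξ ≤ C * (ξ ⬝ᵥ ξ)) {W : Ω → n → ℝ} (hW : MemLp W 2 μ)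
    {l : n → ℝ} (hWl : ∫ ω, W ω ∂μ = meanInv μ A *ᵥ l) :
    energy μ A W = l ⬝ᵥ meanInv μ A *ᵥ l + energy μ A (W - fun ω => (A ω)⁻¹ *ᵥ l) := by
  set u := fun ω => (A ω)⁻¹ *ᵥ l
  have hu : Integrable u μ := memLp_one_iff_integrable.1 (memLp_inv_mulVec hmeas hc hcoer 1 l)
  have hWW := integrable_dotProduct_mulVec_self hmeas
    (hcoer.mono fun _ h => dotProduct_mulVec_self_nonneg_of_coercive hc.le h) hbdd hW
  have hlW := (hW.integrable one_le_two).const_dotProduct l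
  have hexpand : (fun ω => (W - u) ω ⬝ᵥ A ω *ᵥ (W - u) ω)
      =ᵐ[μ] fun ω => W ω ⬝ᵥ A ω *ᵥ W ω - 2 * (l ⬝ᵥ W ω) + l ⬝ᵥ u ω :=
    (hsymm.and hcoer).mono fun ω h =>
      dotProduct_sub_inv_mulVec_expand h.1 (isUnit_of_coercive hc h.2) (W ω) l
  unfold energy
  rw [integral_congr_ae hexpand,
    integral_add (f := fun ω => W ω ⬝ᵥ A ω *ᵥ W ω - 2 * (l ⬝ᵥ W ω))
      (hWW.sub (hlW.const_mul 2)) (hu.const_dotProduct l),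
    integral_sub hWW (hlW.const_mul 2), integral_const_mul,
    integral_dotProduct (hW.integrable one_le_two), integral_dotProduct hu, hWl,
    integral_inv_mulVec hmeas hc hcoer]
  ring

end Finite

section Probability

variable [IsProbabilityMeasure μ]

lemma integral_inv_mulVec_meanInv_inv_mulVec_sub (hmeas : ∀ i j, Measurable fun ω => A ω i j)
    (hc : 0 < c) (hcoer : ∀ᵐ ω ∂μ, ∀ ξ, c * (ξ ⬝ᵥ ξ) ≤ ξ ⬝ᵥ A ω *ᵥ ξ) (e : n → ℝ) :
    ∫ ω, (A ω)⁻¹ *ᵥ ((meanInv μ A)⁻¹ *ᵥ e) - e ∂μ = 0 := by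
  rw [integral_sub (memLp_one_iff_integrable.1 (memLp_inv_mulVec hmeas hc hcoer 1 _))
      (integrable_const e), integral_inv_mulVec hmeas hc hcoer,
    mulVec_inv_mulVec_of_isUnit (isUnit_meanInv hmeas hc hcoer), integral_const, probReal_univ,
    one_smul, sub_self]

lemma energy_const_add_eq_add_energy_sub (hmeas : ∀ i j, Measurable fun ω => A ω i j)
    (hc : 0 < c) (hsymm : ∀ᵐ ω ∂μ, (A ω).IsSymm)
    (hcoer : ∀ᵐ ω ∂μ, ∀ ξ, c * (ξ ⬝ᵥ ξ) ≤ ξ ⬝ᵥ A ω *ᵥ ξ)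
    (hbdd : ∀ᵐ ω ∂μ, ∀ ξ, ξ ⬝ᵥ A ω *ᵥ ξ ≤ C * (ξ ⬝ᵥ ξ)) {V : Ω → n → ℝ} (hV : MemLp V 2 μ)
    (hV0 : ∫ ω, V ω ∂μ = 0) (e : n → ℝ) :
    energy μ A (fun ω => e + V ω) = e ⬝ᵥ (meanInv μ A)⁻¹ *ᵥ e
      + energy μ A ((fun ω => e + V ω) - fun ω => (A ω)⁻¹ *ᵥ ((meanInv μ A)⁻¹ *ᵥ e)) := by
  have hl := mulVec_inv_mulVec_of_isUnit (isUnit_meanInv hmeas hc hcoer) e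
  have hmean : ∫ ω, e + V ω ∂μ = meanInv μ A *ᵥ ((meanInv μ A)⁻¹ *ᵥ e) := by
    rw [integral_add (integrable_const e) (hV.integrable one_le_two), hV0, add_zero,
      integral_const, probReal_univ, one_smul, hl]
  rw [energy_eq_add_energy_sub (W := fun ω => e + V ω) hmeas hc hsymm hcoer hbdd
    ((memLp_const e).add hV) hmean, hl, dotProduct_comm]

end Probability

end RandomMatrix

theorem relaxed_minimisation_general {Ω : Type*} [MeasurableSpace Ω] (ℙ : Measure Ω)
    [IsProbabilityMeasure ℙ] (d : ℕ) (A : Ω → Matrix (Fin d) (Fin d) ℝ)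
    (hmeas : ∀ i j, Measurable fun ω => A ω i j) (c C : ℝ) (hc : 0 < c)
    (hA : ∀ᵐ ω ∂ℙ, (A ω).IsSymm ∧ ∀ ξ : Fin d → ℝ,
      c * (ξ ⬝ᵥ ξ) ≤ ξ ⬝ᵥ (A ω).mulVec ξ ∧ ξ ⬝ᵥ (A ω).mulVec ξ ≤ C * (ξ ⬝ᵥ ξ))
    (e : Fin d → ℝ)
    (B : Matrix (Fin d) (Fin d) ℝ) (hB : ∀ i j, B i j = ∫ ω, (A ω)⁻¹ i j ∂ℙ) :
    sInf {r : ℝ | ∃ V : Ω → Fin d → ℝ, MemLp V 2 ℙ ∧ (∫ ω, V ω ∂ℙ) = 0 ∧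
        r = ∫ ω, (e + V ω) ⬝ᵥ (A ω).mulVec (e + V ω) ∂ℙ}
      = e ⬝ᵥ B⁻¹.mulVec e ∧
    (MemLp (fun ω => (A ω)⁻¹.mulVec (B⁻¹.mulVec e) - e) 2 ℙ ∧
      (∫ ω, ((A ω)⁻¹.mulVec (B⁻¹.mulVec e) - e) ∂ℙ) = 0 ∧
      (∫ ω, (e + ((A ω)⁻¹.mulVec (B⁻¹.mulVec e) - e)) ⬝ᵥ
          (A ω).mulVec (e + ((A ω)⁻¹.mulVec (B⁻¹.mulVec e) - e)) ∂ℙ)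
        = e ⬝ᵥ B⁻¹.mulVec e) ∧
    (∀ V : Ω → Fin d → ℝ, MemLp V 2 ℙ → (∫ ω, V ω ∂ℙ) = 0 →
      (∫ ω, (e + V ω) ⬝ᵥ (A ω).mulVec (e + V ω) ∂ℙ) = e ⬝ᵥ B⁻¹.mulVec e →
      V =ᵐ[ℙ] fun ω => (A ω)⁻¹.mulVec (B⁻¹.mulVec e) - e) := by
  obtain rfl : B = meanInv ℙ A := ext hB
  have hsymm : ∀ᵐ ω ∂ℙ, (A ω).IsSymm := hA.mono fun _ h => h.1
  have hcoer : ∀ᵐ ω ∂ℙ, ∀ ξ, c * (ξ ⬝ᵥ ξ) ≤ ξ ⬝ᵥ A ω *ᵥ ξ := hA.mono fun _ h ξ => (h.2 ξ).1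
  have hbdd : ∀ᵐ ω ∂ℙ, ∀ ξ, ξ ⬝ᵥ A ω *ᵥ ξ ≤ C * (ξ ⬝ᵥ ξ) := hA.mono fun _ h ξ => (h.2 ξ).2
  have hgap := fun V (hV : MemLp V 2 ℙ) hV0 =>
    energy_const_add_eq_add_energy_sub hmeas hc hsymm hcoer hbdd hV hV0 e
  set u := fun ω => (A ω)⁻¹ *ᵥ ((meanInv ℙ A)⁻¹ *ᵥ e)
  have hVmem : MemLp (fun ω => u ω - e) 2 ℙ :=
    (memLp_inv_mulVec hmeas hc hcoer 2 _).sub (memLp_const e)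
  have hV0 : ∫ ω, u ω - e ∂ℙ = 0 := integral_inv_mulVec_meanInv_inv_mulVec_sub hmeas hc hcoer e
  have hVval : energy ℙ A (fun ω => e + (u ω - e)) = e ⬝ᵥ (meanInv ℙ A)⁻¹ *ᵥ e :=
    (hgap _ hVmem hV0).trans (by simp [energy])
  refine ⟨IsLeast.csInf_eq ⟨⟨_, hVmem, hV0, hVval.symm⟩, ?_⟩, ⟨hVmem, hV0, hVval⟩,
    fun V hV hV0 hval => ?_⟩
  · rintro _ ⟨V, hV, hV0, rfl⟩
    change _ ≤ energy ℙ A fun ω => e + V ω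
    exact (hgap V hV hV0).symm ▸ le_add_of_nonneg_right (energy_nonneg
      (hcoer.mono fun _ h => dotProduct_mulVec_self_nonneg_of_coercive hc.le h) _)
  · change energy ℙ A (fun ω => e + V ω) = _ at hval
    have hzero := ae_eq_zero_of_energy_eq_zero (W := (fun ω => e + V ω) - u) hmeas hc hcoer hbdd
      (((memLp_const e).add hV).sub (memLp_inv_mulVec hmeas hc hcoer 2 _))
      (by linarith [hgap V hV hV0])
    filter_upwards [hzero] with ω h
    exact eq_sub_of_add_eq' (sub_eq_zero.1 h)

/-- Relaxed minimisation over mean-zero square-integrable vector fields: for an a.e. symmetric,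
uniformly elliptic random matrix `A`, the infimum of `∫ (e+V) · A (e+V) dℙ` over all
`V ∈ L²(Ω, ℙ; ℝᵈ)` with `∫ V dℙ = 0` equals `e · (∫ A⁻¹ dℙ)⁻¹ e`; it is attained at
`V* = A⁻¹ λ − e` with `λ = (∫ A⁻¹ dℙ)⁻¹ e`, and the minimizer is unique up to a.e. equality. -/
theorem relaxed_minimisation {Ω : Type*} [MeasurableSpace Ω] (ℙ : Measure Ω)
    [IsProbabilityMeasure ℙ] (d : ℕ) (A : Ω → Matrix (Fin d) (Fin d) ℝ)
    (hmeas : ∀ i j, Measurable fun ω => A ω i j) (c C : ℝ) (hc : 0 < c) (hcC : c ≤ C)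
    (hA : ∀ᵐ ω ∂ℙ, (A ω).IsSymm ∧ ∀ ξ : Fin d → ℝ,
      c * (ξ ⬝ᵥ ξ) ≤ ξ ⬝ᵥ (A ω).mulVec ξ ∧ ξ ⬝ᵥ (A ω).mulVec ξ ≤ C * (ξ ⬝ᵥ ξ))
    (e : Fin d → ℝ)
    (B : Matrix (Fin d) (Fin d) ℝ) (hB : ∀ i j, B i j = ∫ ω, (A ω)⁻¹ i j ∂ℙ) :
    sInf {r : ℝ | ∃ V : Ω → Fin d → ℝ, MemLp V 2 ℙ ∧ (∫ ω, V ω ∂ℙ) = 0 ∧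
        r = ∫ ω, (e + V ω) ⬝ᵥ (A ω).mulVec (e + V ω) ∂ℙ}
      = e ⬝ᵥ B⁻¹.mulVec e ∧
    (MemLp (fun ω => (A ω)⁻¹.mulVec (B⁻¹.mulVec e) - e) 2 ℙ ∧
      (∫ ω, ((A ω)⁻¹.mulVec (B⁻¹.mulVec e) - e) ∂ℙ) = 0 ∧
      (∫ ω, (e + ((A ω)⁻¹.mulVec (B⁻¹.mulVec e) - e)) ⬝ᵥ
          (A ω).mulVec (e + ((A ω)⁻¹.mulVec (B⁻¹.mulVec e) - e)) ∂ℙ)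
        = e ⬝ᵥ B⁻¹.mulVec e) ∧
    (∀ V : Ω → Fin d → ℝ, MemLp V 2 ℙ → (∫ ω, V ω ∂ℙ) = 0 →
      (∫ ω, (e + V ω) ⬝ᵥ (A ω).mulVec (e + V ω) ∂ℙ) = e ⬝ᵥ B⁻¹.mulVec e →
      V =ᵐ[ℙ] fun ω => (A ω)⁻¹.mulVec (B⁻¹.mulVec e) - e) :=
  relaxed_minimisation_general ℙ d A hmeas c C hc hA e B hB
end

section
/- Let (Ω, 𝔉, ℙ) be a probability space and a : Ω → ℝ measurable with 1 ≤ a(ω) ≤ M for ℙ-almost every ω, for some constant M ≥ 1, and set Z = ∫_Ω a dℙ. Then the function V₀ = a/Z − 1 satisfies ∫_Ω V₀ dℙ = 0 and ∫_Ω (1 + V₀(ω))²/a(ω) dℙ(ω) = 1/Z, and for every V ∈ L²(Ω, ℙ; ℝ) with ∫_Ω V dℙ = 0 one has ∫_Ω (1 + V(ω))²/a(ω) dℙ(ω) ≥ 1/Z. In particular the minimum value of this functional over mean-zero square-integrable V equals 1/Z. -/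
/-!
Completing the square, `x² / a - (2 t x - t² a) = (x - t a)² / a ≥ 0` for `a > 0`. Integrating
with `x = 1 + V` and `t = 1 / Z` gives `∫ (1 + V)² / a ≥ 2 / Z - Z / Z² = 1 / Z` whenever `V` has
mean zero, with equality when `1 + V = a / Z`, i.e. for `V = V₀`.
-/

open MeasureTheory

theorem two_mul_mul_sub_sq_mul_le_sq_div {a : ℝ} (ha : 0 < a) (t x : ℝ) :
    2 * t * x - t ^ 2 * a ≤ x ^ 2 / a := by
  have hsq : x ^ 2 / a - (2 * t * x - t ^ 2 * a) = (x - t * a) ^ 2 / a := by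
    field_simp
    ring
  have : 0 ≤ (x - t * a) ^ 2 / a := by positivity
  linarith

section Sedrakyan

variable {α : Type*} [MeasurableSpace α] {μ : Measure α} {f a : α → ℝ}

theorem two_mul_mul_integral_sub_le_integral_sq_div (hf : Integrable f μ)
    (ha : Integrable a μ) (hpos : ∀ᵐ x ∂μ, 0 < a x)
    (hfa : Integrable (fun x => f x ^ 2 / a x) μ) (t : ℝ) :
    2 * t * ∫ x, f x ∂μ - t ^ 2 * ∫ x, a x ∂μ ≤ ∫ x, f x ^ 2 / a x ∂μ := by
  rw [← integral_const_mul, ← integral_const_mul, ← integral_sub (hf.const_mul _)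
    (ha.const_mul _)]
  exact integral_mono_ae ((hf.const_mul _).sub (ha.const_mul _)) hfa
    (hpos.mono fun x hx => two_mul_mul_sub_sq_mul_le_sq_div hx t (f x))

theorem sq_integral_div_integral_le_integral_sq_div (hf : Integrable f μ)
    (ha : Integrable a μ) (hpos : ∀ᵐ x ∂μ, 0 < a x)
    (hfa : Integrable (fun x => f x ^ 2 / a x) μ) :
    (∫ x, f x ∂μ) ^ 2 / ∫ x, a x ∂μ ≤ ∫ x, f x ^ 2 / a x ∂μ := by
  convert two_mul_mul_integral_sub_le_integral_sq_div hf ha hpos hfa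
    ((∫ x, f x ∂μ) / ∫ x, a x ∂μ) using 1
  -- if `∫ a = 0`, both sides vanish since `x / 0 = 0`
  rcases eq_or_ne (∫ x, a x ∂μ) 0 with h | h
  · simp [h]
  · field_simp
    ring

theorem MeasureTheory.MemLp.integrable_sq_div {c : ℝ} (hf : MemLp f 2 μ)
    (ha : AEStronglyMeasurable a μ) (hc : 0 < c) (hca : ∀ᵐ x ∂μ, c ≤ a x) :
    Integrable (fun x => f x ^ 2 / a x) μ := by
  refine (hf.integrable_sq.const_mul c⁻¹).mono'
    ((hf.1.aemeasurable.pow_const 2).div ha.aemeasurable).aestronglyMeasurable ?_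
  filter_upwards [hca] with x hx
  rw [Real.norm_of_nonneg (div_nonneg (sq_nonneg _) (hc.trans_le hx).le), inv_mul_eq_div]
  exact div_le_div_of_nonneg_left (sq_nonneg _) hc hx

end Sedrakyan

theorem one_dim_effective_diffusion_general {Ω : Type*} [MeasurableSpace Ω] (ℙ : Measure Ω)
    [IsProbabilityMeasure ℙ] (a : Ω → ℝ) (hmeas : Measurable a) (M : ℝ)
    (hb : ∀ᵐ ω ∂ℙ, 1 ≤ a ω ∧ a ω ≤ M) (Z : ℝ) (hZ : Z = ∫ ω, a ω ∂ℙ) :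
    (∫ ω, (a ω / Z - 1) ∂ℙ) = 0 ∧
    (∫ ω, (1 + (a ω / Z - 1)) ^ 2 / a ω ∂ℙ) = 1 / Z ∧
    (∀ V : Ω → ℝ, MemLp V 2 ℙ → (∫ ω, V ω ∂ℙ) = 0 →
      (∫ ω, (1 + V ω) ^ 2 / a ω ∂ℙ) ≥ 1 / Z) ∧
    IsLeast {r : ℝ | ∃ V : Ω → ℝ, MemLp V 2 ℙ ∧ (∫ ω, V ω ∂ℙ) = 0 ∧
      r = ∫ ω, (1 + V ω) ^ 2 / a ω ∂ℙ} (1 / Z) := by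
  have ha_one : ∀ᵐ ω ∂ℙ, 1 ≤ a ω := hb.mono fun _ h => h.1
  have ha_L2 : MemLp a 2 ℙ := MemLp.of_bound hmeas.aestronglyMeasurable M
    (hb.mono fun _ h => abs_le.2 ⟨by linarith [h.1], h.2⟩)
  have ha_int : Integrable a ℙ := ha_L2.integrable one_le_two
  have hZ_one : 1 ≤ Z := by
    simpa [hZ] using integral_mono_ae (integrable_const 1) ha_int ha_one
  have hZ_ne : Z ≠ 0 := (zero_lt_one.trans_le hZ_one).ne'
  have mean_zero : ∫ ω, (a ω / Z - 1) ∂ℙ = 0 := by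
    rw [integral_sub (ha_int.div_const Z) (integrable_const 1), integral_div, ← hZ]
    simp [hZ_ne]
  have value : ∫ ω, (1 + (a ω / Z - 1)) ^ 2 / a ω ∂ℙ = 1 / Z := by
    calc _ = ∫ ω, a ω / Z ^ 2 ∂ℙ := integral_congr_ae <| ha_one.mono fun ω h => by
            have : a ω ≠ 0 := by linarith
            field_simp
            ring
      _ = 1 / Z := by rw [integral_div, ← hZ]; field_simp
  have lower : ∀ V : Ω → ℝ, MemLp V 2 ℙ → ∫ ω, V ω ∂ℙ = 0 →
      ∫ ω, (1 + V ω) ^ 2 / a ω ∂ℙ ≥ 1 / Z := by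
    intro V hV hV_mean
    have h1V : MemLp (fun ω => 1 + V ω) 2 ℙ := (memLp_const (1 : ℝ)).add hV
    have hmass : ∫ ω, (1 + V ω) ∂ℙ = 1 := by
      rw [integral_add (integrable_const 1) (hV.integrable one_le_two), hV_mean]
      simp
    have := sq_integral_div_integral_le_integral_sq_div (h1V.integrable one_le_two) ha_int
      (ha_one.mono fun _ h => zero_lt_one.trans_le h)
      (h1V.integrable_sq_div hmeas.aestronglyMeasurable one_pos ha_one)
    rwa [hmass, ← hZ, one_pow] at this
  refine ⟨mean_zero, value, lower,
    ⟨fun ω => a ω / Z - 1, (ha_L2.mul_const Z⁻¹).sub (memLp_const (1 : ℝ)), mean_zero, value.symm⟩, ?_⟩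
  rintro r ⟨V, hV, hV_mean, rfl⟩
  exact lower V hV hV_mean

/-- One-dimensional effective diffusion computation: with `1 ≤ a ≤ M` a.e. and `Z = ∫ a dℙ`,
the function `V₀ = a/Z − 1` has mean zero and `∫ (1+V₀)²/a dℙ = 1/Z`, and every mean-zero
`V ∈ L²` satisfies `∫ (1+V)²/a dℙ ≥ 1/Z`; in particular the minimum value of this functional
over mean-zero square-integrable `V` equals `1/Z`. -/
theorem one_dim_effective_diffusion {Ω : Type*} [MeasurableSpace Ω] (ℙ : Measure Ω)
    [IsProbabilityMeasure ℙ] (a : Ω → ℝ) (hmeas : Measurable a) (M : ℝ) (hM : 1 ≤ M)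
    (hb : ∀ᵐ ω ∂ℙ, 1 ≤ a ω ∧ a ω ≤ M) (Z : ℝ) (hZ : Z = ∫ ω, a ω ∂ℙ) :
    (∫ ω, (a ω / Z - 1) ∂ℙ) = 0 ∧
    (∫ ω, (1 + (a ω / Z - 1)) ^ 2 / a ω ∂ℙ) = 1 / Z ∧
    (∀ V : Ω → ℝ, MemLp V 2 ℙ → (∫ ω, V ω ∂ℙ) = 0 →
      (∫ ω, (1 + V ω) ^ 2 / a ω ∂ℙ) ≥ 1 / Z) ∧
    IsLeast {r : ℝ | ∃ V : Ω → ℝ, MemLp V 2 ℙ ∧ (∫ ω, V ω ∂ℙ) = 0 ∧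
      r = ∫ ω, (1 + V ω) ^ 2 / a ω ∂ℙ} (1 / Z) :=
  one_dim_effective_diffusion_general ℙ a hmeas M hb Z hZ
end

section
/- Let K > 0 and let h : ℝᵈ → ℝ be twice continuously differentiable with ‖∇h(x)‖ ≤ K for all x ∈ ℝᵈ. Define g(x) = I + ∇h(x) ⊗ ∇h(x) and the drift F : ℝᵈ → ℝᵈ componentwise by F_j(x) = (det g(x))^{-1/2} · Σ_{i=1}^d ∂_{x_i} [ (det g(x))^{1/2} (g(x)⁻¹)_{ij} ]. Then there exists a constant C > 0 depending only on d and K such that ‖F(x)‖ ≤ C · ‖∇²h(x)‖ for all x ∈ ℝᵈ, where ∇²h(x) denotes the Hessian matrix of h at x and ‖∇²h(x)‖ its operator (or Frobenius) norm. -/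
open Matrix

/-- The gradient of `h : ℝᵈ → ℝ` at `x`, given componentwise by partial derivatives. -/
noncomputable def grad {d : ℕ} (h : (Fin d → ℝ) → ℝ) (x : Fin d → ℝ) : Fin d → ℝ :=
  fun i => fderiv ℝ h x (Pi.single i 1)

/-- The metric tensor `g(x) = I + ∇h(x) ⊗ ∇h(x)` of the surface given by the graph of `h`. -/
noncomputable def metricTensor {d : ℕ} (h : (Fin d → ℝ) → ℝ) (x : Fin d → ℝ) :
    Matrix (Fin d) (Fin d) ℝ :=
  1 + Matrix.vecMulVec (grad h x) (grad h x)

/-- The drift `F_j(x) = (det g(x))^{-1/2} Σᵢ ∂ᵢ[(det g(x))^{1/2} (g(x)⁻¹)ᵢⱼ]` of the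
Laplace–Beltrami diffusion in local coordinates. -/
noncomputable def drift {d : ℕ} (h : (Fin d → ℝ) → ℝ) (x : Fin d → ℝ) : Fin d → ℝ :=
  fun j => (Real.sqrt (metricTensor h x).det)⁻¹ *
    ∑ i, fderiv ℝ (fun y => Real.sqrt (metricTensor h y).det * ((metricTensor h y)⁻¹ i j))
      x (Pi.single i 1)

/-! ### Auxiliary lemmas -/

lemma dotSelf_nonneg' {d : ℕ} (p : Fin d → ℝ) : 0 ≤ p ⬝ᵥ p :=
  Finset.sum_nonneg fun _ _ => mul_self_nonneg _

lemma one_add_dot_pos {d : ℕ} (p : Fin d → ℝ) : (0:ℝ) < 1 + p ⬝ᵥ p := by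
  linarith [dotSelf_nonneg' p]

lemma det_metric' {d : ℕ} (p : Fin d → ℝ) : (1 + vecMulVec p p).det = 1 + p ⬝ᵥ p := by
  rw [vecMulVec_eq (Fin 1) p p, det_one_add_replicateCol_mul_replicateRow]

lemma vecMulVec_mul_self {d : ℕ} (p : Fin d → ℝ) :
    vecMulVec p p * vecMulVec p p = (p ⬝ᵥ p) • vecMulVec p p := by
  ext i j
  simp only [Matrix.mul_apply, vecMulVec_apply, Matrix.smul_apply, smul_eq_mul, dotProduct]
  rw [Finset.sum_mul]
  apply Finset.sum_congr rfl
  intros; ring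

lemma inv_metric' {d : ℕ} (p : Fin d → ℝ) :
    (1 + vecMulVec p p)⁻¹ = 1 - (1 + p ⬝ᵥ p)⁻¹ • vecMulVec p p := by
  apply inv_eq_right_inv
  set A := vecMulVec p p
  have hA : A * ((1 + p ⬝ᵥ p)⁻¹ • A) = ((1 + p ⬝ᵥ p)⁻¹ * (p ⬝ᵥ p)) • A := by
    rw [Matrix.mul_smul, vecMulVec_mul_self, smul_smul]
  have hc : (1 + p ⬝ᵥ p)⁻¹ • A + ((1 + p ⬝ᵥ p)⁻¹ * (p ⬝ᵥ p)) • A = A := by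
    rw [← add_smul]
    have h1 : (1 + p ⬝ᵥ p)⁻¹ + (1 + p ⬝ᵥ p)⁻¹ * (p ⬝ᵥ p) = 1 := by
      have hne := (one_add_dot_pos p).ne'
      field_simp
    rw [h1, one_smul]
  calc (1 + A) * (1 - (1 + p ⬝ᵥ p)⁻¹ • A)
      = 1 - (1 + p ⬝ᵥ p)⁻¹ • A + (A - A * ((1 + p ⬝ᵥ p)⁻¹ • A)) := by
        rw [add_mul, one_mul, mul_sub, mul_one]
    _ = 1 - (1 + p ⬝ᵥ p)⁻¹ • A + (A - ((1 + p ⬝ᵥ p)⁻¹ * (p ⬝ᵥ p)) • A) := by rw [hA]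
    _ = 1 + (A - ((1 + p ⬝ᵥ p)⁻¹ • A + ((1 + p ⬝ᵥ p)⁻¹ * (p ⬝ᵥ p)) • A)) := by abel
    _ = 1 := by rw [hc]; simp

/-- entrywise version of `√(det g) • g⁻¹` as a function of the gradient vector. -/
noncomputable def Phi (d : ℕ) (p : Fin d → ℝ) : Fin d → Fin d → ℝ :=
  fun i j => Real.sqrt (1 + p ⬝ᵥ p) *
    ((if i = j then (1:ℝ) else 0) - (1 + p ⬝ᵥ p)⁻¹ * (p i * p j))

lemma contDiff_dotSelf (d : ℕ) : ContDiff ℝ (⊤ : ℕ∞) (fun p : Fin d → ℝ => 1 + p ⬝ᵥ p) := by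
  apply contDiff_const.add
  show ContDiff ℝ (⊤ : ℕ∞) (fun p : Fin d → ℝ => ∑ i, p i * p i)
  exact ContDiff.sum fun i _ => (contDiff_apply ℝ ℝ i).mul (contDiff_apply ℝ ℝ i)

lemma contDiff_Phi (d : ℕ) : ContDiff ℝ (⊤ : ℕ∞) (Phi d) := by
  apply contDiff_pi.2; intro i
  apply contDiff_pi.2; intro j
  have hs := contDiff_dotSelf d
  have hsqrt : ContDiff ℝ (⊤ : ℕ∞) (fun p : Fin d → ℝ => Real.sqrt (1 + p ⬝ᵥ p)) := by
    rw [contDiff_iff_contDiffAt]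
    intro p
    exact (Real.contDiffAt_sqrt (one_add_dot_pos p).ne').comp p hs.contDiffAt
  have hinv : ContDiff ℝ (⊤ : ℕ∞) (fun p : Fin d → ℝ => (1 + p ⬝ᵥ p)⁻¹) :=
    hs.inv fun p => (one_add_dot_pos p).ne'
  exact hsqrt.mul (contDiff_const.sub
    (hinv.mul ((contDiff_apply ℝ ℝ i).mul (contDiff_apply ℝ ℝ j))))

lemma entry_eq {d : ℕ} (h : (Fin d → ℝ) → ℝ) (y : Fin d → ℝ) (i j : Fin d) :
    Real.sqrt (metricTensor h y).det * ((metricTensor h y)⁻¹ i j) = Phi d (grad h y) i j := by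
  rw [metricTensor, det_metric', inv_metric']
  simp [Phi, Matrix.sub_apply, Matrix.smul_apply, Matrix.one_apply, vecMulVec_apply,
    smul_eq_mul]

/-- The continuous linear map sending a functional to its vector of values on basis vectors. -/
noncomputable def Tmap (d : ℕ) : ((Fin d → ℝ) →L[ℝ] ℝ) →L[ℝ] (Fin d → ℝ) :=
  ContinuousLinearMap.pi fun i => ContinuousLinearMap.apply ℝ ℝ (Pi.single i 1)

lemma grad_eq {d : ℕ} (h : (Fin d → ℝ) → ℝ) : grad h = fun y => Tmap d (fderiv ℝ h y) := rfl

lemma norm_Tmap_le (d : ℕ) : ‖Tmap d‖ ≤ 1 := by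
  refine ContinuousLinearMap.opNorm_le_bound _ zero_le_one fun L => ?_
  rw [one_mul]
  rw [pi_norm_le_iff_of_nonneg (x := Tmap d L) (norm_nonneg L)]
  intro i
  have : Tmap d L i = L (Pi.single i 1) := rfl
  rw [this]
  calc ‖L (Pi.single i 1)‖ ≤ ‖L‖ * ‖(Pi.single i 1 : Fin d → ℝ)‖ := L.le_opNorm _
    _ = ‖L‖ := by
        have hone : ‖(Pi.single i 1 : Fin d → ℝ)‖ = 1 := by
          rw [Pi.norm_single]; exact norm_one
        rw [hone, mul_one]

/-- There is a constant `C > 0`, depending only on `d` and `K`, such that for every `C²`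
function `h : ℝᵈ → ℝ` with `‖∇h(x)‖ ≤ K` everywhere, the drift of the Laplace–Beltrami
diffusion satisfies `‖F(x)‖ ≤ C ‖∇²h(x)‖` for all `x`. -/
theorem drift_bound (d : ℕ) (K : ℝ) (hK : 0 < K) :
    ∃ C > 0, ∀ h : (Fin d → ℝ) → ℝ, ContDiff ℝ 2 h →
      (∀ x, Real.sqrt (grad h x ⬝ᵥ grad h x) ≤ K) →
      ∀ x, Real.sqrt (drift h x ⬝ᵥ drift h x) ≤ C * ‖iteratedFDeriv ℝ 2 h x‖ := by
  obtain ⟨M, hM⟩ := (isCompact_closedBall (0 : Fin d → ℝ) K).exists_bound_of_continuousOn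
    ((contDiff_Phi d).continuous_fderiv (by simp)).continuousOn
  have hM0 : 0 ≤ M :=
    le_trans (norm_nonneg _) (hM 0 (Metric.mem_closedBall_self hK.le))
  refine ⟨Real.sqrt d * d * (M + 1) + 1, by positivity, ?_⟩
  intro h hh hgradK x
  set H := ‖iteratedFDeriv ℝ 2 h x‖ with hHdef
  have hH0 : 0 ≤ H := norm_nonneg _
  set p := grad h x with hp
  -- the gradient lies in the ball of radius K
  have hpball : p ∈ Metric.closedBall (0 : Fin d → ℝ) K := by
    rw [Metric.mem_closedBall, dist_zero_right]
    rw [pi_norm_le_iff_of_nonneg (x := p) hK.le]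
    intro i
    calc ‖p i‖ = Real.sqrt (p i * p i) := by
          rw [Real.sqrt_mul_self_eq_abs]; rfl
      _ ≤ Real.sqrt (p ⬝ᵥ p) := Real.sqrt_le_sqrt
          (Finset.single_le_sum (fun k _ => mul_self_nonneg (p k)) (Finset.mem_univ i))
      _ ≤ K := hgradK x
  -- differentiability of the gradient
  have hfd : ContDiff ℝ 1 (fderiv ℝ h) := hh.fderiv_right (by norm_num)
  set G := fderiv ℝ (fderiv ℝ h) x with hG
  have hGnorm : ‖G‖ = H := by
    rw [hHdef, hG, ← norm_iteratedFDeriv_fderiv (n := 1),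
      ← norm_iteratedFDeriv_fderiv (n := 0), norm_iteratedFDeriv_zero]
  have hgradD : HasFDerivAt (grad h) ((Tmap d).comp G) x := by
    rw [grad_eq h]
    exact (Tmap d).hasFDerivAt.comp x ((hfd.differentiable (by norm_num) x).hasFDerivAt)
  have hPhiD : HasFDerivAt (Phi d) (fderiv ℝ (Phi d) p) p :=
    ((contDiff_Phi d).differentiable (by simp) p).hasFDerivAt
  set Ψ' := (fderiv ℝ (Phi d) p).comp ((Tmap d).comp G) with hΨ'def
  have hΨ : HasFDerivAt (fun y => Phi d (grad h y)) Ψ' x := HasFDerivAt.comp (g := Phi d) (f := grad h) x hPhiD hgradD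
  -- computation of the derivative of each entry
  have hderiv : ∀ (i j : Fin d) (v : Fin d → ℝ),
      fderiv ℝ (fun y => Real.sqrt (metricTensor h y).det * ((metricTensor h y)⁻¹ i j)) x v
        = Ψ' v i j := by
    intro i j v
    have hfun : (fun y => Real.sqrt (metricTensor h y).det * ((metricTensor h y)⁻¹ i j))
        = fun y => Phi d (grad h y) i j := funext fun y => entry_eq h y i j
    rw [hfun]
    have hc : HasFDerivAt (fun y => Phi d (grad h y) i j)
        (((ContinuousLinearMap.proj j).comp
          (ContinuousLinearMap.proj i : (Fin d → Fin d → ℝ) →L[ℝ] (Fin d → ℝ))).comp Ψ') x :=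
      ((ContinuousLinearMap.proj j).comp
        (ContinuousLinearMap.proj i : (Fin d → Fin d → ℝ) →L[ℝ] (Fin d → ℝ))).hasFDerivAt.comp
          x hΨ
    rw [hc.fderiv]
    rfl
  -- norm of the full derivative
  have hΨ'norm : ‖Ψ'‖ ≤ M * H := by
    calc ‖Ψ'‖ ≤ ‖fderiv ℝ (Phi d) p‖ * ‖(Tmap d).comp G‖ :=
          ContinuousLinearMap.opNorm_comp_le _ _
      _ ≤ M * (1 * ‖G‖) := by
          apply mul_le_mul (hM p hpball) ?_ (norm_nonneg _) hM0
          calc ‖(Tmap d).comp G‖ ≤ ‖Tmap d‖ * ‖G‖ := ContinuousLinearMap.opNorm_comp_le _ _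
            _ ≤ 1 * ‖G‖ := mul_le_mul_of_nonneg_right (norm_Tmap_le d) (by positivity)
      _ = M * H := by rw [one_mul, hGnorm]
  -- bound on each component of the drift
  have hcomp : ∀ j, |drift h x j| ≤ (d : ℝ) * ((M + 1) * H) := by
    intro j
    have hterm : ∀ i : Fin d, |Ψ' (Pi.single i 1) i j| ≤ (M + 1) * H := by
      intro i
      calc |Ψ' (Pi.single i 1) i j| ≤ ‖Ψ' (Pi.single i 1) i‖ :=
            norm_le_pi_norm (Ψ' (Pi.single i 1) i) j
        _ ≤ ‖Ψ' (Pi.single i 1)‖ := norm_le_pi_norm (Ψ' (Pi.single i 1)) i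
        _ ≤ ‖Ψ'‖ * ‖(Pi.single i 1 : Fin d → ℝ)‖ := Ψ'.le_opNorm _
        _ = ‖Ψ'‖ := by
            have hone : ‖(Pi.single i 1 : Fin d → ℝ)‖ = 1 := by
              rw [Pi.norm_single]; exact norm_one
            rw [hone, mul_one]
        _ ≤ M * H := hΨ'norm
        _ ≤ (M + 1) * H := mul_le_mul_of_nonneg_right (by linarith) hH0
    have hsum : |∑ i, Ψ' (Pi.single i 1) i j| ≤ (d : ℝ) * ((M + 1) * H) := by
      calc |∑ i, Ψ' (Pi.single i 1) i j| ≤ ∑ i, |Ψ' (Pi.single i 1) i j| :=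
            Finset.abs_sum_le_sum_abs _ _
        _ ≤ ∑ _i : Fin d, (M + 1) * H := Finset.sum_le_sum fun i _ => hterm i
        _ = (d : ℝ) * ((M + 1) * H) := by
            rw [Finset.sum_const, Finset.card_univ, Fintype.card_fin, nsmul_eq_mul]
    -- the prefactor lies in [0,1]
    have hdet : (metricTensor h x).det = 1 + p ⬝ᵥ p := by
      rw [metricTensor, det_metric']
    have hc0 : 0 ≤ (Real.sqrt (metricTensor h x).det)⁻¹ := by positivity
    have hc1 : (Real.sqrt (metricTensor h x).det)⁻¹ ≤ 1 := by
      rw [hdet]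
      have h1 : (1:ℝ) ≤ Real.sqrt (1 + p ⬝ᵥ p) :=
        Real.one_le_sqrt.2 (by linarith [dotSelf_nonneg' p])
      exact inv_le_one_of_one_le₀ h1
    have : drift h x j = (Real.sqrt (metricTensor h x).det)⁻¹
        * ∑ i, Ψ' (Pi.single i 1) i j := by
      rw [drift]
      congr 1
      exact Finset.sum_congr rfl fun i _ => hderiv i j (Pi.single i 1)
    rw [this, abs_mul, abs_of_nonneg hc0]
    calc (Real.sqrt (metricTensor h x).det)⁻¹ * |∑ i, Ψ' (Pi.single i 1) i j|
        ≤ 1 * ((d : ℝ) * ((M + 1) * H)) := by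
          apply mul_le_mul hc1 hsum (abs_nonneg _) zero_le_one
      _ = (d : ℝ) * ((M + 1) * H) := one_mul _
  -- conclusion
  set b : ℝ := (d : ℝ) * ((M + 1) * H) with hb
  have hb0 : 0 ≤ b := by positivity
  have hdot : drift h x ⬝ᵥ drift h x ≤ (d : ℝ) * (b * b) := by
    calc drift h x ⬝ᵥ drift h x = ∑ j, drift h x j * drift h x j := rfl
      _ ≤ ∑ _j : Fin d, b * b := by
          apply Finset.sum_le_sum
          intro j _
          calc drift h x j * drift h x j = |drift h x j| * |drift h x j| :=
                (abs_mul_abs_self _).symm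
            _ ≤ b * b := mul_le_mul (hcomp j) (hcomp j) (abs_nonneg _) hb0
      _ = (d : ℝ) * (b * b) := by
          rw [Finset.sum_const, Finset.card_univ, Fintype.card_fin, nsmul_eq_mul]
  calc Real.sqrt (drift h x ⬝ᵥ drift h x) ≤ Real.sqrt ((d : ℝ) * (b * b)) :=
        Real.sqrt_le_sqrt hdot
    _ = Real.sqrt d * b := by
        rw [Real.sqrt_mul (Nat.cast_nonneg d), Real.sqrt_mul_self hb0]
    _ = (Real.sqrt d * d * (M + 1)) * H := by rw [hb]; ring
    _ ≤ (Real.sqrt d * d * (M + 1) + 1) * H := by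
        apply mul_le_mul_of_nonneg_right _ hH0
        linarith
end
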